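/- Let 0 < p ≤ 1, N, m ∈ ℕ, λ > 0, let G : ℝ^N → ℝ^m be any map, y ∈ ℝ^m, and let Γ be a symmetric positive definite m×m real matrix. Define J_p(u) = (λ/2)Σ_{i=1}^N |u_i|^p + (1/2)⟨y − G(u), Γ⁻¹(y − G(u))⟩ and J₂(v) = (λ/2)Σ_{i=1}^N v_i² + (1/2)⟨y − G(Ξ(v)), Γ⁻¹(y − G(Ξ(v)))⟩. Then u* ∈ ℝ^N is a global minimizer of J_p if and only if Ψ(u*) is a global minimizer of J₂. -/

import Mathlib

open Matrix

/-- The transformation `ψ(x) = sgn(x) |x|^(p/2)`. -/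
noncomputable def psi (p : ℝ) (x : ℝ) : ℝ := Real.sign x * |x| ^ (p / 2)

/-- The transformation `ξ(x) = sgn(x) |x|^(2/p)`. -/
noncomputable def xi (p : ℝ) (x : ℝ) : ℝ := Real.sign x * |x| ^ (2 / p)

/-- Componentwise application of `ψ` on `ℝ^N`. -/
noncomputable def Psi (p : ℝ) (N : ℕ) (u : Fin N → ℝ) : Fin N → ℝ :=
  fun i => psi p (u i)

/-- Componentwise application of `ξ` on `ℝ^N`. -/
noncomputable def Xi (p : ℝ) (N : ℕ) (v : Fin N → ℝ) : Fin N → ℝ :=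
  fun i => xi p (v i)

/-! The substitution `u = Ξ(v)` is a bijection of `ℝ^N` with inverse `Ψ`, and it turns
`|u_i|^p` into `v_i²`; hence `J₂ = J_p ∘ Ξ`, and minimizers correspond under `Ψ`. -/

namespace Real

theorem abs_sign_mul_abs_rpow {r : ℝ} (hr : r ≠ 0) (x : ℝ) :
    |sign x * |x| ^ r| = |x| ^ r := by
  rcases eq_or_ne x 0 with rfl | hx
  · simp [zero_rpow hr]
  · rw [abs_mul, abs_of_nonneg (rpow_nonneg (abs_nonneg x) r)]
    rcases hx.lt_or_gt with hneg | hpos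
    · simp [sign_of_neg hneg]
    · simp [sign_of_pos hpos]

theorem sign_sign_mul_abs_rpow (r x : ℝ) : sign (sign x * |x| ^ r) = sign x := by
  rcases lt_trichotomy x 0 with hneg | rfl | hpos
  · have : 0 < |x| ^ r := rpow_pos_of_pos (abs_pos.mpr hneg.ne) r
    rw [sign_of_neg hneg, sign_of_neg (by linarith)]
  · simp
  · have : 0 < |x| ^ r := rpow_pos_of_pos (abs_pos.mpr hpos.ne') r
    rw [sign_of_pos hpos, sign_of_pos (by simpa using this)]

theorem sign_mul_abs (x : ℝ) : sign x * |x| = x := by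
  rcases lt_trichotomy x 0 with hneg | rfl | hpos
  · simp [sign_of_neg hneg, abs_of_neg hneg]
  · simp
  · simp [sign_of_pos hpos, abs_of_pos hpos]

theorem abs_sign_mul_abs_rpow_rpow {r : ℝ} (hr : r ≠ 0) (x s : ℝ) :
    |sign x * |x| ^ r| ^ s = |x| ^ (r * s) := by
  rw [abs_sign_mul_abs_rpow hr, rpow_mul (abs_nonneg x)]

end Real

theorem xi_psi {p : ℝ} (hp : p ≠ 0) (x : ℝ) : xi p (psi p x) = x := by
  have hexp : p / 2 * (2 / p) = 1 := by field_simp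
  rw [xi, psi, Real.sign_sign_mul_abs_rpow, Real.abs_sign_mul_abs_rpow_rpow (by positivity), hexp,
    Real.rpow_one, Real.sign_mul_abs]

theorem abs_xi_rpow {p : ℝ} (hp : p ≠ 0) (x : ℝ) : |xi p x| ^ p = x ^ 2 := by
  have hexp : 2 / p * p = (2 : ℕ) := by push_cast; field_simp
  rw [xi, Real.abs_sign_mul_abs_rpow_rpow (by positivity), hexp, Real.rpow_natCast, sq_abs]

theorem Xi_Psi {p : ℝ} (hp : p ≠ 0) {N : ℕ} (u : Fin N → ℝ) : Xi p N (Psi p N u) = u :=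
  funext fun i => xi_psi hp (u i)

theorem Xi_surjective {p : ℝ} (hp : p ≠ 0) (N : ℕ) : Function.Surjective (Xi p N) :=
  fun u => ⟨Psi p N u, Xi_Psi hp u⟩

theorem sum_abs_Xi_rpow {p : ℝ} (hp : p ≠ 0) {N : ℕ} (v : Fin N → ℝ) :
    ∑ i, |Xi p N v i| ^ p = ∑ i, v i ^ 2 :=
  Finset.sum_congr rfl fun i _ => abs_xi_rpow hp (v i)

theorem lp_l2_global_min_iff_general (p : ℝ) (hp0 : 0 < p)
    (N m : ℕ) (lam : ℝ)
    (G : (Fin N → ℝ) → (Fin m → ℝ)) (y : Fin m → ℝ)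
    (Γ : Matrix (Fin m) (Fin m) ℝ)
    (Jp J2 : (Fin N → ℝ) → ℝ)
    (hJp : ∀ u, Jp u = lam / 2 * ∑ i, |u i| ^ p
        + 1 / 2 * ((y - G u) ⬝ᵥ (Γ⁻¹ *ᵥ (y - G u))))
    (hJ2 : ∀ v, J2 v = lam / 2 * ∑ i, (v i) ^ 2
        + 1 / 2 * ((y - G (Xi p N v)) ⬝ᵥ (Γ⁻¹ *ᵥ (y - G (Xi p N v)))))
    (ustar : Fin N → ℝ) :
    (∀ w, Jp ustar ≤ Jp w) ↔ (∀ w, J2 (Psi p N ustar) ≤ J2 w) := by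
  have hJ2_eq : ∀ v, J2 v = Jp (Xi p N v) := fun v => by
    rw [hJ2, hJp, sum_abs_Xi_rpow hp0.ne']
  simp only [hJ2_eq, Xi_Psi hp0.ne']
  exact (Xi_surjective hp0.ne' N).forall

theorem lp_l2_global_min_iff (p : ℝ) (hp0 : 0 < p) (hp1 : p ≤ 1)
    (N m : ℕ) (lam : ℝ) (hlam : 0 < lam)
    (G : (Fin N → ℝ) → (Fin m → ℝ)) (y : Fin m → ℝ)
    (Γ : Matrix (Fin m) (Fin m) ℝ) (hΓ : Γ.PosDef)
    (Jp J2 : (Fin N → ℝ) → ℝ)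
    (hJp : ∀ u, Jp u = lam / 2 * ∑ i, |u i| ^ p
        + 1 / 2 * ((y - G u) ⬝ᵥ (Γ⁻¹ *ᵥ (y - G u))))
    (hJ2 : ∀ v, J2 v = lam / 2 * ∑ i, (v i) ^ 2
        + 1 / 2 * ((y - G (Xi p N v)) ⬝ᵥ (Γ⁻¹ *ᵥ (y - G (Xi p N v)))))
    (ustar : Fin N → ℝ) :
    (∀ w, Jp ustar ≤ Jp w) ↔ (∀ w, J2 (Psi p N ustar) ≤ J2 w) :=
  lp_l2_global_min_iff_general p hp0 N m lam G y Γ Jp J2 hJp hJ2 ustar
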